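/- arXiv:0807.0095 — 5 statements merged into one kernel-verified Lean document; each statement's English description precedes it below -/
import Mathlib

section
/- For every λ in the resolvent set of A, the operator Γ(λ) := (I + (λ−λ₀)(A−λ)⁻¹)Γ_{λ₀} maps its domain G₀ bijectively onto ker(T−λ). -/
open scoped InnerProductSpace ComplexConjugate

noncomputable section

variable {H G : Type*}
  [NormedAddCommGroup H] [InnerProductSpace ℂ H] [CompleteSpace H]
  [NormedAddCommGroup G] [InnerProductSpace ℂ G] [CompleteSpace G]

/-- `R` is the (bounded, everywhere defined) resolvent of `A` at `lam`. -/
def IsResolventAt (A : H →ₗ.[ℂ] H) (lam : ℂ) (R : H →L[ℂ] H) : Prop :=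
  (∀ x : H, ∃ hx : R x ∈ A.domain, A ⟨R x, hx⟩ - lam • R x = x) ∧
  (∀ x : A.domain, R (A x - lam • (x : H)) = x)

/-- `lam` belongs to the resolvent set of `A`. -/
def InResolventSet (A : H →ₗ.[ℂ] H) (lam : ℂ) : Prop :=
  ∃ R : H →L[ℂ] H, IsResolventAt A lam R

/-- A partially defined operator is symmetric. -/
def PMapIsSymmetric (S : H →ₗ.[ℂ] H) : Prop :=
  ∀ f g : S.domain, ⟪S f, (g : H)⟫_ℂ = ⟪(f : H), S g⟫_ℂ

/-- The defect set `ker (T - lam)` of a partially defined operator `T`. -/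
def kerAt (T : H →ₗ.[ℂ] H) (lam : ℂ) : Set H :=
  {f | ∃ hf : f ∈ T.domain, T ⟨f, hf⟩ = lam • f}

/-- In the setting of a densely defined closed symmetric operator `S`, a selfadjoint
extension `A` of `S` and an operator `T` with `A ⊆ T ⊆ S*`, `T̄ = S*`, and a densely defined
bounded injective operator `Γ_{λ₀}` with range `ker (T - λ₀)`, the operator
`Γ(lam) = (I + (lam - lam₀)(A - lam)⁻¹) Γ_{λ₀}` maps its domain `G₀` bijectively
onto `ker (T - lam)`, for every `lam` in the resolvent set of `A`. -/
theorem statement1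
    (S A T : H →ₗ.[ℂ] H)
    (hSdense : Dense (S.domain : Set H)) (hSclosed : S.IsClosed)
    (hSsym : PMapIsSymmetric S)
    (hA : IsSelfAdjoint A) (hSA : S ≤ A)
    (hAT : A ≤ T) (hTS : T ≤ S.adjoint) (hTcl : T.closure = S.adjoint)
    (G₀ : Submodule ℂ G) (hG₀ : Dense (G₀ : Set G))
    (Γ₀ : G₀ →ₗ[ℂ] H) (C : ℝ) (hΓ₀bdd : ∀ g : G₀, ‖Γ₀ g‖ ≤ C * ‖(g : G)‖)
    (hΓ₀inj : Function.Injective Γ₀)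
    (lam₀ : ℂ) (hlam₀ : InResolventSet A lam₀)
    (hΓ₀ran : Set.range Γ₀ = kerAt T lam₀)
    (lam : ℂ) (Rlam : H →L[ℂ] H) (hlam : IsResolventAt A lam Rlam) :
    Function.Injective (fun g : G₀ => Γ₀ g + (lam - lam₀) • Rlam (Γ₀ g)) ∧
      Set.range (fun g : G₀ => Γ₀ g + (lam - lam₀) • Rlam (Γ₀ g)) = kerAt T lam := by
  obtain ⟨R₀, hR₀⟩ := hlam₀
  -- abbreviation: the map in question
  set Φ : G₀ → H := fun g : G₀ => Γ₀ g + (lam - lam₀) • Rlam (Γ₀ g) with hΦ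
  -- Every Γ₀ g lies in kerAt T lam₀
  have hker₀ : ∀ g : G₀, Γ₀ g ∈ kerAt T lam₀ := by
    intro g; rw [← hΓ₀ran]; exact ⟨g, rfl⟩
  -- a key computation: if f ∈ kerAt T lam₀ then Φ-style image is in kerAt T lam,
  -- generic lemma: for f ∈ ker(T - μ) and resolvent R at ν, f + (ν - μ) • R f ∈ ker(T - ν)
  have key : ∀ (μ ν : ℂ) (R : H →L[ℂ] H), IsResolventAt A ν R →
      ∀ f ∈ kerAt T μ, f + (ν - μ) • R f ∈ kerAt T ν := by
    rintro μ ν R hR f ⟨hf, hTf⟩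
    obtain ⟨hRf, hARf⟩ := hR.1 f
    have hRfT : R f ∈ T.domain := hAT.1 hRf
    have hmem : f + (ν - μ) • R f ∈ T.domain :=
      T.domain.add_mem hf (T.domain.smul_mem _ hRfT)
    refine ⟨hmem, ?_⟩
    have hsplit : (⟨f + (ν - μ) • R f, hmem⟩ : T.domain)
        = ⟨f, hf⟩ + (ν - μ) • ⟨R f, hRfT⟩ := Subtype.ext rfl
    have hTR : T ⟨R f, hRfT⟩ = A ⟨R f, hRf⟩ := (hAT.2 rfl).symm
    have hA' : A ⟨R f, hRf⟩ = f + ν • R f := by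
      have := hARf; linear_combination (norm := module) this
    rw [hsplit, T.map_add, T.map_smul, hTf, hTR, hA']
    module
  constructor
  · -- injectivity
    intro g₁ g₂ hgg
    have hlin : Φ g₁ - Φ g₂ = Φ (g₁ - g₂) := by
      simp only [hΦ, map_sub]
      module
    have h0 : Φ (g₁ - g₂) = 0 := by
      rw [← hlin, sub_eq_zero]; exact hgg
    set f := Γ₀ (g₁ - g₂) with hfdef
    have hf0 : f + (lam - lam₀) • Rlam f = 0 := h0
    have hfeq : f = (lam₀ - lam) • Rlam f := by
      linear_combination (norm := module) hf0
    obtain ⟨hRf, hARf⟩ := hlam.1 f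
    have hfA : f ∈ A.domain := by rw [hfeq]; exact A.domain.smul_mem _ hRf
    -- A f = lam₀ • f
    have hAfval : A ⟨f, hfA⟩ = lam₀ • f := by
      have hsub : (⟨f, hfA⟩ : A.domain) = (lam₀ - lam) • ⟨Rlam f, hRf⟩ :=
        Subtype.ext hfeq
      rw [hsub, A.map_smul]
      linear_combination (norm := module) (lam₀ - lam) • hARf - lam • hfeq
    have : R₀ (A ⟨f, hfA⟩ - lam₀ • f) = f := hR₀.2 ⟨f, hfA⟩
    rw [hAfval, sub_self, map_zero] at this
    have hgz : g₁ - g₂ = 0 := hΓ₀inj (by rw [← hfdef, ← this, map_zero])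
    exact sub_eq_zero.mp hgz
  · -- range
    ext h
    constructor
    · rintro ⟨g, rfl⟩
      exact key lam₀ lam Rlam hlam (Γ₀ g) (hker₀ g)
    · rintro hh
      -- f := h + (lam₀ - lam) • R₀ h ∈ ker (T - lam₀)
      have hf : h + (lam₀ - lam) • R₀ h ∈ kerAt T lam₀ :=
        key lam lam₀ R₀ hR₀ h hh
      set f := h + (lam₀ - lam) • R₀ h with hfdef
      rw [← hΓ₀ran] at hf
      obtain ⟨g, hg⟩ := hf
      refine ⟨g, ?_⟩
      -- Rlam f = R₀ h
      obtain ⟨hR₀h, hAR₀h⟩ := hR₀.1 h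
      have hres : Rlam f = R₀ h := by
        have := hlam.2 ⟨R₀ h, hR₀h⟩
        have hval : A ⟨R₀ h, hR₀h⟩ - lam • (R₀ h) = f := by
          linear_combination (norm := module) hAR₀h
        rw [hval] at this
        exact this
      simp only [hΦ, hg, hres]
      rw [hfdef]
      module
end
end

section
/- The closures Γ̄(λ) of the operators Γ(λ) satisfy the identity Q̃(λ) − Q̃(μ)* = (λ − μ̄) Γ̄(μ)* Γ̄(λ) for all λ, μ ∈ ℂ∖ℝ, where Q̃(λ) = Γ_{λ₀}*((λ−Re λ₀)+(λ−λ₀)(λ−λ̄₀)(A−λ)⁻¹)Γ̄_{λ₀}. -/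
open scoped InnerProductSpace ComplexConjugate

noncomputable section

variable {H G : Type*}
  [NormedAddCommGroup H] [InnerProductSpace ℂ H] [CompleteSpace H]
  [NormedAddCommGroup G] [InnerProductSpace ℂ G] [CompleteSpace G]

/-- Let `A` be selfadjoint, `lam₀ ∈ ℂ∖ℝ` and `Γ̄₀ ∈ L(G, H)`.  With
`Γ̄(lam) = (I + (lam - lam₀)(A - lam)⁻¹) Γ̄₀` and
`Q̃(lam) = Γ̄₀* ((lam - Re lam₀) + (lam - lam₀)(lam - conj lam₀)(A - lam)⁻¹) Γ̄₀`,
the identity `Q̃(lam) - Q̃(mu)* = (lam - conj mu) Γ̄(mu)* Γ̄(lam)` holds for all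
`lam, mu ∈ ℂ∖ℝ`. -/
theorem statement7
    (A : H →ₗ.[ℂ] H) (hA : IsSelfAdjoint A)
    (lam₀ : ℂ) (hlam₀ : lam₀.im ≠ 0)
    (Γbar : G →L[ℂ] H)
    (R : ℂ → (H →L[ℂ] H)) (hR : ∀ lam : ℂ, lam.im ≠ 0 → IsResolventAt A lam (R lam))
    (Qt : ℂ → (G →L[ℂ] G))
    (hQt : ∀ lam : ℂ, lam.im ≠ 0 → ∀ k : G,
      Qt lam k = ContinuousLinearMap.adjoint Γbar
        ((lam - (lam₀.re : ℂ)) • Γbar k +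
          ((lam - lam₀) * (lam - (starRingEnd ℂ) lam₀)) • R lam (Γbar k))) :
    ∀ lam mu : ℂ, lam.im ≠ 0 → mu.im ≠ 0 →
      Qt lam - ContinuousLinearMap.adjoint (Qt mu) =
        (lam - (starRingEnd ℂ) mu) •
          ((ContinuousLinearMap.adjoint (Γbar + (mu - lam₀) • (R mu).comp Γbar)).comp
            (Γbar + (lam - lam₀) • (R lam).comp Γbar)) := by
  intro lam mu hl hm
  set m : ℂ := (starRingEnd ℂ) mu with hmdef
  have hmbar : m.im ≠ 0 := by
    simp [hmdef, Complex.conj_im, neg_ne_zero, hm]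
  -- symmetry of A
  have heq : LinearPMap.adjoint A = A := hA
  have hsymm : ∀ x y : A.domain, ⟪(A x : H), (y : H)⟫_ℂ = ⟪(x : H), (A y : H)⟫_ℂ := by
    have h := LinearPMap.adjoint_isFormalAdjoint (hA.dense_domain)
    rw [heq] at h
    exact fun x y => h x y
  -- adjoint of resolvent
  have hadj : ∀ x y : H, ⟪(R mu) x, y⟫_ℂ = ⟪x, (R m) y⟫_ℂ := by
    intro x y
    obtain ⟨hx, hx2⟩ := (hR mu hm).1 x
    obtain ⟨hy, hy2⟩ := (hR m hmbar).1 y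
    set x' : A.domain := ⟨R mu x, hx⟩ with hx'
    set y' : A.domain := ⟨R m y, hy⟩ with hy'
    have e1 : ⟪((R mu) x : H), y⟫_ℂ = ⟪(x' : H), (A y' : H)⟫_ℂ - m * ⟪(x' : H), (y' : H)⟫_ℂ := by
      rw [← hy2]
      simp [inner_sub_right, inner_smul_right, hx', hy']
    have e2 : ⟪x, ((R m) y : H)⟫_ℂ = ⟪(A x' : H), (y' : H)⟫_ℂ - m * ⟪(x' : H), (y' : H)⟫_ℂ := by
      rw [← hx2]
      simp [inner_sub_left, inner_smul_left, hx', hy', hmdef]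
      ring
    rw [e1, e2, hsymm x' y']
  -- resolvent identity
  have hres : ∀ v : H, (R lam) v - (R m) v = (lam - m) • (R m) ((R lam) v) := by
    intro v
    obtain ⟨hv, hv2⟩ := (hR lam hl).1 v
    have h2 := (hR m hmbar).2 ⟨(R lam) v, hv⟩
    have key : (A ⟨(R lam) v, hv⟩ : H) - m • ((⟨(R lam) v, hv⟩ : A.domain) : H)
        = v + (lam - m) • (R lam) v := by
      have step : (A ⟨(R lam) v, hv⟩ : H) - m • ((⟨(R lam) v, hv⟩ : A.domain) : H)
          = ((A ⟨(R lam) v, hv⟩ : H) - lam • ((R lam) v)) + (lam - m) • (R lam) v := by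
        show (A ⟨(R lam) v, hv⟩ : H) - m • ((R lam) v)
          = ((A ⟨(R lam) v, hv⟩ : H) - lam • ((R lam) v)) + (lam - m) • (R lam) v
        module
      rw [step, hv2]
    rw [key, map_add, map_smul] at h2
    exact sub_eq_of_eq_add' h2.symm
  ext k
  apply ext_inner_left ℂ
  intro h
  set u : H := Γbar h with hu
  set v : H := Γbar k with hv
  have hconE : (lam - m) * ⟪u, (R m) ((R lam) v)⟫_ℂ = ⟪u, (R lam) v⟫_ℂ - ⟪u, (R m) v⟫_ℂ := by
    rw [← inner_smul_right, ← hres v, inner_sub_right]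
  have hQl := hQt lam hl k
  have hQm := hQt mu hm h
  simp only [ContinuousLinearMap.sub_apply, ContinuousLinearMap.smul_apply,
    ContinuousLinearMap.comp_apply, ContinuousLinearMap.add_apply, hQl, hQm,
    inner_sub_right, inner_smul_right, ContinuousLinearMap.adjoint_inner_right,
    ContinuousLinearMap.adjoint_inner_left, inner_add_left, inner_add_right,
    inner_smul_left, inner_smul_right, map_sub, map_mul, map_add, RingHom.id_apply,
    Complex.conj_conj, Complex.conj_ofReal, ← hu, ← hv, ← hmdef, hadj]
  linear_combination (-(m - (starRingEnd ℂ) lam₀) * (lam - lam₀)) * hconE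
end
end

section
/- A densely defined closed symmetric operator S in a Hilbert space H is simple if and only if H equals the closed linear span of the defect spaces ker(S* − λ) over all λ ∈ ℂ∖ℝ; moreover, when A ⊆ T ⊆ S* with closure of T equal to S*, this span coincides with the closed linear span of ker(T − λ) over λ ∈ ℂ∖ℝ. -/
open scoped InnerProductSpace ComplexConjugate

set_option linter.unusedSectionVars false
set_option linter.unusedVariables false
set_option maxHeartbeats 1000000

noncomputable section

variable {H : Type*} [NormedAddCommGroup H] [InnerProductSpace ℂ H] [CompleteSpace H]

/-- `S` restricted to the subspace `D ⊆ dom S` is a selfadjoint operator in the Hilbert space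
`closure D`: there exists a partially defined operator `SD` in `↥(closure D)` which is
selfadjoint and whose graph consists precisely of the pairs `(x, S x)` with `x ∈ D`. -/
def RestrictsToSelfAdjoint (S : H →ₗ.[ℂ] H) (D : Submodule ℂ H) : Prop :=
  ∃ SD : ↥D.topologicalClosure →ₗ.[ℂ] ↥D.topologicalClosure,
    IsSelfAdjoint SD ∧
    ∀ x y : ↥D.topologicalClosure,
      (x, y) ∈ SD.graph ↔
        ((x : H) ∈ D ∧ ∃ hx : (x : H) ∈ S.domain, S ⟨(x : H), hx⟩ = (y : H))

/-- A densely defined closed symmetric operator `S` is simple if there is no nontrivial subspace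
`D ⊆ dom S` such that the restriction of `S` to `D` is a selfadjoint operator in `closure D`. -/
def IsSimplePMap (S : H →ₗ.[ℂ] H) : Prop :=
  ¬ ∃ D : Submodule ℂ H, D ≠ ⊥ ∧ (D : Set H) ⊆ S.domain ∧ RestrictsToSelfAdjoint S D

namespace St10

variable {E : Type*} [NormedAddCommGroup E] [InnerProductSpace ℂ E] [CompleteSpace E]

/-- `A - lam` as a linear map on the domain of `A`. -/
def L (A : E →ₗ.[ℂ] E) (lam : ℂ) : A.domain →ₗ[ℂ] E :=
  A.toFun - lam • A.domain.subtype

lemma L_apply (A : E →ₗ.[ℂ] E) (lam : ℂ) (x : A.domain) :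
    L A lam x = A x - lam • (x : E) := rfl

/-- Symmetric partially defined operator. -/
def Symm (A : E →ₗ.[ℂ] E) : Prop :=
  ∀ x y : A.domain, ⟪A x, (y : E)⟫_ℂ = ⟪(x : E), A y⟫_ℂ

lemma lower_bound {A : E →ₗ.[ℂ] E} (hA : Symm A) (lam : ℂ) (x : A.domain) :
    |lam.im| * ‖(x : E)‖ ≤ ‖L A lam x‖ := by
  have hreal : (⟪A x, (x : E)⟫_ℂ).im = 0 := by
    have h1 : ⟪A x, (x : E)⟫_ℂ = conj ⟪A x, (x : E)⟫_ℂ :=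
      (hA x x).trans (inner_conj_symm _ _).symm
    have h2 := congrArg Complex.im h1
    rw [Complex.conj_im] at h2
    linarith
  have hx : ⟪(x : E), (x : E)⟫_ℂ = (‖(x : E)‖ : ℂ) ^ 2 := inner_self_eq_norm_sq_to_K _
  have hinner : ⟪L A lam x, (x : E)⟫_ℂ
      = ⟪A x, (x : E)⟫_ℂ - conj lam * (‖(x : E)‖ : ℂ) ^ 2 := by
    rw [L_apply, inner_sub_left, inner_smul_left, hx]
  have him : (⟪L A lam x, (x : E)⟫_ℂ).im = lam.im * (‖(x : E)‖ * ‖(x : E)‖) := by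
    rw [hinner]
    simp only [Complex.sub_im, Complex.mul_im, hreal, Complex.conj_im, Complex.conj_re]
    have : ((‖(x : E)‖ : ℂ) ^ 2).im = 0 := by
      norm_cast
    have h2 : ((‖(x : E)‖ : ℂ) ^ 2).re = ‖(x : E)‖ * ‖(x : E)‖ := by
      norm_cast
      exact sq ‖(x : E)‖ ▸ (sq ‖(x : E)‖).symm ▸ (by ring)
    rw [this, h2]
    ring
  have hcs : |lam.im| * (‖(x : E)‖ * ‖(x : E)‖) ≤ ‖L A lam x‖ * ‖(x : E)‖ := by
    calc |lam.im| * (‖(x : E)‖ * ‖(x : E)‖) = |lam.im * (‖(x : E)‖ * ‖(x : E)‖)| := by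
          rw [abs_mul, abs_of_nonneg (mul_nonneg (norm_nonneg _) (norm_nonneg _))]
    _ = |(⟪L A lam x, (x : E)⟫_ℂ).im| := by rw [him]
    _ ≤ ‖⟪L A lam x, (x : E)⟫_ℂ‖ := Complex.abs_im_le_norm _
    _ = ‖⟪L A lam x, (x : E)⟫_ℂ‖ := rfl
    _ ≤ ‖L A lam x‖ * ‖(x : E)‖ := norm_inner_le_norm _ _
  rcases eq_or_ne ‖(x : E)‖ 0 with h0 | h0
  · rw [h0, mul_zero]
    exact norm_nonneg _
  · have hxpos : 0 < ‖(x : E)‖ := lt_of_le_of_ne (norm_nonneg _) (Ne.symm h0)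
    nlinarith

/-- Range of `A - lam` is closed when `A` is symmetric closed and `lam` nonreal. -/
lemma range_L_closed {A : E →ₗ.[ℂ] E} (hA : Symm A) (hcl : A.IsClosed) {lam : ℂ}
    (hlam : lam.im ≠ 0) : IsClosed ((LinearMap.range (L A lam) : Submodule ℂ E) : Set E) := by
  rw [← isSeqClosed_iff_isClosed]
  intro u y hu huy
  choose x hx using fun n => (LinearMap.mem_range.mp (hu n))
  -- x is Cauchy
  have him : 0 < |lam.im| := abs_pos.mpr hlam
  have hbound : ∀ n m, ‖(x n : E) - (x m : E)‖ ≤ |lam.im|⁻¹ * ‖u n - u m‖ := by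
    intro n m
    have h1 : |lam.im| * ‖((x n - x m : A.domain) : E)‖ ≤ ‖L A lam (x n - x m)‖ :=
      lower_bound hA lam _
    rw [map_sub, hx n, hx m] at h1
    have h2 : ((x n - x m : A.domain) : E) = (x n : E) - (x m : E) := rfl
    rw [h2] at h1
    rw [inv_mul_eq_div, le_div_iff₀ him]
    linarith
  have hcauchy : CauchySeq fun n => (x n : E) := by
    have hucau : CauchySeq u := huy.cauchySeq
    rw [Metric.cauchySeq_iff] at hucau ⊢
    intro ε hε
    obtain ⟨N, hN⟩ := hucau (ε * |lam.im|) (by positivity)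
    refine ⟨N, fun n hn m hm => ?_⟩
    have := hbound n m
    have h3 : dist (u n) (u m) < ε * |lam.im| := hN n hn m hm
    rw [dist_eq_norm] at h3 ⊢
    calc ‖(x n : E) - (x m : E)‖ ≤ |lam.im|⁻¹ * ‖u n - u m‖ := hbound n m
    _ < |lam.im|⁻¹ * (ε * |lam.im|) := by
        apply mul_lt_mul_of_pos_left h3 (by positivity)
    _ = ε := by field_simp
  obtain ⟨z, hz⟩ := cauchySeq_tendsto_of_complete hcauchy
  -- A (x n) converges to y + lam z
  have hAx : ∀ n, A (x n) = u n + lam • (x n : E) := by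
    intro n
    have := hx n
    rw [L_apply] at this
    rw [← this]; abel
  have hAxlim : Filter.Tendsto (fun n => A (x n)) Filter.atTop (nhds (y + lam • z)) := by
    simp_rw [hAx]
    exact huy.add ((hz.const_smul lam))
  -- graph membership
  have hgraph : (z, y + lam • z) ∈ A.graph := by
    have : ∀ n, ((x n : E), A (x n)) ∈ A.graph := fun n => A.mem_graph (x n)
    have hpt : Filter.Tendsto (fun n => ((x n : E), A (x n))) Filter.atTop
        (nhds (z, y + lam • z)) := hz.prodMk_nhds hAxlim
    exact hcl.isSeqClosed (fun n => this n) hpt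
  rw [LinearPMap.mem_graph_iff] at hgraph
  obtain ⟨w, hw1, hw2⟩ := hgraph
  refine LinearMap.mem_range.mpr ⟨w, ?_⟩
  simp only at hw1 hw2
  rw [L_apply, hw2, hw1]
  abel

open LinearPMap

/-- The graph of the adjoint is closed. -/
lemma adjoint_isClosed (A : E →ₗ.[ℂ] E) (hd : Dense (A.domain : Set E)) :
    A.adjoint.IsClosed := by
  have hgraph : (A.adjoint.graph : Set (E × E))
      = ⋂ x : A.domain, {p : E × E | ⟪p.2, (x : E)⟫_ℂ = ⟪p.1, A x⟫_ℂ} := by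
    ext p
    constructor
    · intro hp
      rw [SetLike.mem_coe, LinearPMap.mem_graph_iff] at hp
      obtain ⟨y, hy1, hy2⟩ := hp
      simp only [Set.mem_iInter, Set.mem_setOf_eq]
      intro x
      rw [← hy2, ← hy1]
      exact (adjoint_isFormalAdjoint hd) y x
    · intro hp
      simp only [Set.mem_iInter, Set.mem_setOf_eq] at hp
      have hmem : p.1 ∈ A.adjoint.domain :=
        mem_adjoint_domain_of_exists _ ⟨p.2, fun x => hp x⟩
      have happ : A.adjoint ⟨p.1, hmem⟩ = p.2 :=
        adjoint_apply_eq hd _ (fun x => hp x)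
      rw [SetLike.mem_coe, LinearPMap.mem_graph_iff]
      exact ⟨⟨p.1, hmem⟩, rfl, happ⟩
  rw [LinearPMap.IsClosed, hgraph]
  refine isClosed_iInter fun x => ?_
  exact isClosed_eq ((continuous_snd.inner continuous_const)) (continuous_fst.inner continuous_const)

/-- Orthogonality to the range of `A - lam` puts `g` in `ker (A† - conj lam)`. -/
lemma mem_kerAt_adjoint_of_orth {A : E →ₗ.[ℂ] E} (hd : Dense (A.domain : Set E)) {lam : ℂ}
    {g : E} (hg : ∀ x : A.domain, ⟪g, L A lam x⟫_ℂ = 0) :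
    g ∈ kerAt A.adjoint (conj lam) := by
  have key : ∀ x : A.domain, ⟪conj lam • g, (x : E)⟫_ℂ = ⟪g, A x⟫_ℂ := by
    intro x
    have := hg x
    rw [L_apply, inner_sub_right, sub_eq_zero, inner_smul_right] at this
    rw [inner_smul_left, Complex.conj_conj]
    exact this.symm
  have hmem : g ∈ A.adjoint.domain :=
    mem_adjoint_domain_of_exists _ ⟨conj lam • g, key⟩
  exact ⟨hmem, adjoint_apply_eq hd _ key⟩

/-- For `g ∈ ker (A† - ν)` and `x` in the domain, `⟪g, (A - lam) x⟫ = (conj ν - lam) ⟪g, x⟫`. -/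
lemma inner_L_of_mem_kerAt {A : E →ₗ.[ℂ] E} (hd : Dense (A.domain : Set E)) {ν : ℂ}
    {g : E} (hg : g ∈ kerAt A.adjoint ν) (lam : ℂ) (x : A.domain) :
    ⟪g, L A lam x⟫_ℂ = (conj ν - lam) * ⟪g, (x : E)⟫_ℂ := by
  obtain ⟨hmem, happ⟩ := hg
  have h1 : ⟪g, A x⟫_ℂ = conj ν * ⟪g, (x : E)⟫_ℂ := by
    have := (adjoint_isFormalAdjoint hd) ⟨g, hmem⟩ x
    simp only [happ] at this
    rw [← this, inner_smul_left]
  rw [L_apply, inner_sub_right, inner_smul_right, h1]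
  ring

lemma symm_of_selfAdjoint {A : E →ₗ.[ℂ] E} (hA : IsSelfAdjoint A) : Symm A := by
  intro x y
  have hd := hA.dense_domain
  have heq : A.adjoint = A := hA
  -- (x, A x) ∈ A.graph = A†.graph
  have hx : ((x : E), A x) ∈ A.adjoint.graph := by
    rw [heq]; exact A.mem_graph x
  rw [LinearPMap.mem_graph_iff] at hx
  obtain ⟨x', hx1, hx2⟩ := hx
  simp only at hx1 hx2
  have := (adjoint_isFormalAdjoint hd) x' y
  rw [hx2, hx1] at this
  exact this

lemma isClosed_of_selfAdjoint {A : E →ₗ.[ℂ] E} (hA : IsSelfAdjoint A) : A.IsClosed := by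
  have heq : A.adjoint = A := hA
  rw [← heq]
  exact adjoint_isClosed A hA.dense_domain

/-- A selfadjoint operator minus a nonreal scalar is surjective. -/
lemma surj_of_selfAdjoint {A : E →ₗ.[ℂ] E} (hA : IsSelfAdjoint A) {lam : ℂ}
    (hlam : lam.im ≠ 0) (y : E) : ∃ x : A.domain, A x - lam • (x : E) = y := by
  have hd := hA.dense_domain
  have hsymm := symm_of_selfAdjoint hA
  have hcl := isClosed_of_selfAdjoint hA
  have horth : (LinearMap.range (L A lam))ᗮ = ⊥ := by
    rw [Submodule.eq_bot_iff]
    intro g hg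
    have hker : g ∈ kerAt A.adjoint (conj lam) := by
      apply mem_kerAt_adjoint_of_orth hd
      intro x
      exact (Submodule.mem_orthogonal' _ _).mp hg _ (LinearMap.mem_range_self _ x)
    rw [LinearPMap.isSelfAdjoint_def.mp hA] at hker
    obtain ⟨hmem, happ⟩ := hker
    have h0 : L A (conj lam) ⟨g, hmem⟩ = 0 := by
      rw [L_apply, happ, sub_self]
    have := lower_bound hsymm (conj lam) ⟨g, hmem⟩
    rw [h0] at this
    simp only [norm_zero, Complex.conj_im, abs_neg] at this
    have him : 0 < |lam.im| := abs_pos.mpr hlam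
    have : ‖g‖ = 0 := by
      by_contra hne
      have : 0 < ‖g‖ := lt_of_le_of_ne (norm_nonneg _) (Ne.symm hne)
      nlinarith
    exact norm_eq_zero.mp this
  have hclosed := range_L_closed hsymm hcl hlam
  have htop : LinearMap.range (L A lam) = ⊤ := by
    haveI : CompleteSpace (LinearMap.range (L A lam)) := hclosed.completeSpace_coe
    exact Submodule.orthogonal_eq_bot_iff.mp horth
  have : y ∈ LinearMap.range (L A lam) := htop ▸ Submodule.mem_top
  obtain ⟨x, hx⟩ := this
  exact ⟨x, by rw [← L_apply, hx]⟩

lemma selfAdjoint_of_symm_of_surj (T : E →ₗ.[ℂ] E) (hd : Dense (T.domain : Set E))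
    (hsym : Symm T)
    (hsurj : ∀ lam : ℂ, lam.im ≠ 0 → ∀ y : E, ∃ x : T.domain, L T lam x = y) :
    IsSelfAdjoint T := by
  have hfa : T.IsFormalAdjoint T := hsym
  have hle : T ≤ T.adjoint := hfa.le_adjoint hd
  rw [LinearPMap.isSelfAdjoint_def]
  symm
  apply LinearPMap.eq_of_le_of_domain_eq hle
  refine le_antisymm hle.1 ?_
  intro y hy
  set y' : T.adjoint.domain := ⟨y, hy⟩
  set z := T.adjoint y'
  obtain ⟨x, hx⟩ := hsurj Complex.I (by simp) (z - Complex.I • y)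
  -- x ∈ T.domain, T x - I x = z - I y
  have hxadj : (x : E) ∈ T.adjoint.domain := hle.1 x.2
  set x' : T.adjoint.domain := ⟨(x : E), hxadj⟩
  have hTx : T.adjoint x' = T x := by
    symm
    exact hle.2 rfl
  -- w := y' - x' satisfies T† w = I w
  set w : T.adjoint.domain := y' - x'
  have hw : T.adjoint w = Complex.I • ((w : E)) := by
    have h1 : T.adjoint w = z - T x := by
      rw [show w = y' - x' from rfl, LinearPMap.map_sub, hTx]
    have hco : ((w : E)) = y - (x : E) := rfl
    rw [h1, hco, smul_sub]
    rw [L_apply] at hx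
    have h2 : z = T x - Complex.I • (x : E) + Complex.I • y := by rw [hx]; abel
    rw [h2]; abel
  -- w is orthogonal to range of (T + I) which is everything
  have hw0 : (w : E) = 0 := by
    have horth : ∀ v : T.domain, ⟪(w : E), L T (-Complex.I) v⟫_ℂ = 0 := by
      intro v
      rw [L_apply, inner_sub_right, inner_smul_right]
      have h1 : ⟪(w : E), T v⟫_ℂ = ⟪T.adjoint w, (v : E)⟫_ℂ :=
        ((adjoint_isFormalAdjoint hd) w v).symm
      rw [h1, hw, inner_smul_left]
      simp [Complex.conj_I]
    obtain ⟨v, hv⟩ := hsurj (-Complex.I) (by simp) (w : E)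
    have := horth v
    rw [hv] at this
    exact inner_self_eq_zero.mp this
  -- conclude y = x
  have hyx : y = (x : E) := by
    have : (y' : E) - (x' : E) = 0 := hw0
    have h2 : (y' : E) = y := rfl
    have h3 : (x' : E) = (x : E) := rfl
    rw [h2, h3] at this
    exact sub_eq_zero.mp this
  rw [hyx]
  exact x.2

/-- The span of the defect spaces. -/
def Gsp (W : E →ₗ.[ℂ] E) : Submodule ℂ E :=
  Submodule.span ℂ (⋃ lam ∈ {z : ℂ | z.im ≠ 0}, kerAt W lam)

lemma mem_orth_Gsp_iff {W : E →ₗ.[ℂ] E} {f : E} :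
    f ∈ (Gsp W)ᗮ ↔ ∀ lam : ℂ, lam.im ≠ 0 → ∀ g ∈ kerAt W lam, ⟪g, f⟫_ℂ = 0 := by
  rw [Submodule.mem_orthogonal]
  constructor
  · intro h lam hlam g hg
    apply h
    apply Submodule.subset_span
    exact Set.mem_biUnion hlam hg
  · intro h u hu
    induction hu using Submodule.span_induction with
    | mem u hu =>
      obtain ⟨lam, hlam, hg⟩ := Set.mem_iUnion₂.mp hu
      exact h lam hlam u hg
    | zero => simp
    | add u v _ _ hu hv => rw [inner_add_left, hu, hv, add_zero]
    | smul c u _ hu => rw [inner_smul_left, hu, mul_zero]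

section Resolvent

variable {S : E →ₗ.[ℂ] E}

/-- Existence of a preimage under `S - lam` for `f` orthogonal to all defect spaces. -/
lemma exists_preimage (hd : Dense (S.domain : Set E)) (hsym : Symm S) (hcl : S.IsClosed) {f : E} (hf : f ∈ (Gsp S.adjoint)ᗮ) {lam : ℂ} (hlam : lam.im ≠ 0) :
    ∃ x : S.domain, L S lam x = f := by
  set R : Submodule ℂ E := LinearMap.range (L S lam)
  have hRclosed : IsClosed (R : Set E) := range_L_closed hsym hcl hlam
  have hmem : f ∈ Rᗮᗮ := by
    rw [Submodule.mem_orthogonal]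
    intro g hg
    have hgker : g ∈ kerAt S.adjoint (conj lam) := by
      apply mem_kerAt_adjoint_of_orth hd
      intro x
      exact (Submodule.mem_orthogonal' _ _).mp hg _ (LinearMap.mem_range_self _ x)
    exact mem_orth_Gsp_iff.mp hf (conj lam) (by simpa using hlam) g hgker
  have hRR : Rᗮᗮ = R := by
    rw [Submodule.orthogonal_orthogonal_eq_closure]
    exact hRclosed.submodule_topologicalClosure_eq
  rw [hRR] at hmem
  exact hmem

/-- The preimage of an element of `M` under `S - lam` is again in `M`. -/
lemma preimage_mem_orth (hd : Dense (S.domain : Set E)) (hsym : Symm S) (hcl : S.IsClosed)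
    {f : E} (hf : f ∈ (Gsp S.adjoint)ᗮ) {lam : ℂ} (hlam : lam.im ≠ 0)
    {x : S.domain} (hx : L S lam x = f) : (x : E) ∈ (Gsp S.adjoint)ᗮ := by
  rw [mem_orth_Gsp_iff]
  intro ν hν g hg
  rcases ne_or_eq (conj ν) lam with hne | heq
  · -- direct computation
    have h1 := inner_L_of_mem_kerAt hd hg lam x
    rw [hx] at h1
    have h2 : ⟪g, f⟫_ℂ = 0 := mem_orth_Gsp_iff.mp hf ν hν g hg
    rw [h2] at h1
    have h3 : conj ν - lam ≠ 0 := sub_ne_zero.mpr hne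
    exact (mul_eq_zero.mp h1.symm).resolve_left h3
  · -- approximation: μ n = lam + 1/(n+1)
    set μ : ℕ → ℂ := fun n => lam + ((n + 1 : ℝ)⁻¹ : ℝ)
    have hμim : ∀ n, (μ n).im = lam.im := by
      intro n; simp [μ]
    have hμne : ∀ n, (μ n).im ≠ 0 := fun n => by rw [hμim]; exact hlam
    have hμlam : ∀ n, μ n ≠ lam := by
      intro n h
      have h2 := congrArg Complex.re h
      simp only [μ, Complex.add_re, Complex.ofReal_re] at h2
      have h3 : ((n : ℝ) + 1)⁻¹ = 0 := by linarith
      have h4 : (0:ℝ) < ((n : ℝ) + 1)⁻¹ := by positivity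
      exact h4.ne' h3
    choose xn hxn using fun n => exists_preimage hd hsym hcl hf (hμne n)
    -- each ⟪g, xn n⟫ = 0
    have hgxn : ∀ n, ⟪g, ((xn n : E))⟫_ℂ = 0 := by
      intro n
      have h1 := inner_L_of_mem_kerAt hd hg (μ n) (xn n)
      rw [hxn n] at h1
      have h2 : ⟪g, f⟫_ℂ = 0 := mem_orth_Gsp_iff.mp hf ν hν g hg
      rw [h2] at h1
      have h3 : conj ν - μ n ≠ 0 := by
        rw [heq]
        intro h
        exact hμlam n (by linear_combination -h)
      exact (mul_eq_zero.mp h1.symm).resolve_left h3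
    -- xn n → x
    have hconv : Filter.Tendsto (fun n => ((xn n : E))) Filter.atTop (nhds (x : E)) := by
      have hineq : ∀ n : ℕ, ‖((xn n : E)) - (x : E)‖ ≤ (n + 1 : ℝ)⁻¹ * ‖(x : E)‖ / |lam.im| := by
        intro n
        have hLdiff : L S (μ n) (xn n - x) = (μ n - lam) • (x : E) := by
          rw [_root_.map_sub, hxn n]
          have : L S (μ n) x = f - (μ n - lam) • (x : E) := by
            rw [L_apply]
            rw [L_apply] at hx
            rw [← hx]
            rw [sub_smul]
            abel
          rw [this]
          abel
        have hlb := lower_bound hsym (μ n) (xn n - x)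
        rw [hLdiff, hμim n] at hlb
        have hsub : ((xn n - x : S.domain) : E) = ((xn n : E)) - (x : E) := rfl
        rw [hsub] at hlb
        have hnorm : ‖(μ n - lam) • (x : E)‖ = (n + 1 : ℝ)⁻¹ * ‖(x : E)‖ := by
          rw [norm_smul]
          congr 1
          simp only [μ, add_sub_cancel_left]
          rw [Complex.norm_real]
          rw [Real.norm_eq_abs, abs_of_pos (by positivity)]
        rw [hnorm] at hlb
        have him : 0 < |lam.im| := abs_pos.mpr hlam
        rw [div_eq_inv_mul, ← mul_assoc, mul_assoc, inv_mul_eq_div, le_div_iff₀ him]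
        nlinarith [hlb]
      have h0 : Filter.Tendsto (fun n : ℕ => (n + 1 : ℝ)⁻¹ * ‖(x : E)‖ / |lam.im|)
          Filter.atTop (nhds 0) := by
        have h1 : Filter.Tendsto (fun n : ℕ => (n + 1 : ℝ)⁻¹) Filter.atTop (nhds 0) :=
          tendsto_one_div_add_atTop_nhds_zero_nat.congr (by intro n; rw [one_div])
        have := (h1.mul_const ‖(x : E)‖).div_const |lam.im|
        simpa using this
      rw [tendsto_iff_norm_sub_tendsto_zero]
      exact squeeze_zero (fun n => norm_nonneg _) hineq h0
    -- conclude by continuity of inner product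
    have : Filter.Tendsto (fun n => ⟪g, ((xn n : E))⟫_ℂ) Filter.atTop (nhds ⟪g, (x : E)⟫_ℂ) :=
      Filter.Tendsto.inner tendsto_const_nhds hconv
    simp_rw [hgxn] at this
    exact (tendsto_nhds_unique tendsto_const_nhds this).symm

end Resolvent

section Hard

variable {S : E →ₗ.[ℂ] E}

/-- The reducing subspace domain. -/
def DD (S : E →ₗ.[ℂ] E) (M : Submodule ℂ E) : Submodule ℂ E where
  carrier := {x | ∃ hx : x ∈ S.domain, x ∈ M ∧ S ⟨x, hx⟩ ∈ M}
  zero_mem' := by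
    refine ⟨S.domain.zero_mem, M.zero_mem, ?_⟩
    have : (⟨0, S.domain.zero_mem⟩ : S.domain) = 0 := rfl
    rw [this, LinearPMap.map_zero]
    exact M.zero_mem
  add_mem' := by
    rintro a b ⟨ha, haM, haS⟩ ⟨hb, hbM, hbS⟩
    refine ⟨S.domain.add_mem ha hb, M.add_mem haM hbM, ?_⟩
    have : (⟨a + b, S.domain.add_mem ha hb⟩ : S.domain) = ⟨a, ha⟩ + ⟨b, hb⟩ := rfl
    rw [this, LinearPMap.map_add]
    exact M.add_mem haS hbS
  smul_mem' := by
    rintro c x ⟨hx, hxM, hxS⟩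
    refine ⟨S.domain.smul_mem c hx, M.smul_mem c hxM, ?_⟩
    have : (⟨c • x, S.domain.smul_mem c hx⟩ : S.domain) = c • ⟨x, hx⟩ := rfl
    rw [this, LinearPMap.map_smul]
    exact M.smul_mem c hxS

lemma mem_DD {M : Submodule ℂ E} {x : E} :
    x ∈ DD S M ↔ ∃ hx : x ∈ S.domain, x ∈ M ∧ S ⟨x, hx⟩ ∈ M := Iff.rfl

variable (hd : Dense (S.domain : Set E)) (hsym : Symm S) (hcl : S.IsClosed)

include hd hsym hcl in
lemma surjD {f : E} (hf : f ∈ (Gsp S.adjoint)ᗮ) {lam : ℂ} (hlam : lam.im ≠ 0) :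
    ∃ x : S.domain, L S lam x = f ∧ (x : E) ∈ DD S (Gsp S.adjoint)ᗮ := by
  obtain ⟨x, hx⟩ := exists_preimage hd hsym hcl hf hlam
  have hxM : (x : E) ∈ (Gsp S.adjoint)ᗮ := preimage_mem_orth hd hsym hcl hf hlam hx
  refine ⟨x, hx, x.2, hxM, ?_⟩
  have hSx : S ⟨(x : E), x.2⟩ = f + lam • (x : E) := by
    have hxx : (⟨(x : E), x.2⟩ : S.domain) = x := rfl
    rw [hxx]
    rw [L_apply] at hx
    rw [← hx]; abel
  rw [hSx]
  exact Submodule.add_mem _ hf (Submodule.smul_mem _ _ hxM)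

include hd hsym hcl in
lemma DD_dense : closure ((DD S (Gsp S.adjoint)ᗮ : Submodule ℂ E) : Set E)
    = (((Gsp S.adjoint)ᗮ : Submodule ℂ E) : Set E) := by
  set M : Submodule ℂ E := (Gsp S.adjoint)ᗮ with hMdef
  set D : Submodule ℂ E := DD S M with hDdef
  have hMclosed : IsClosed (M : Set E) := (Gsp S.adjoint).isClosed_orthogonal
  haveI : CompleteSpace M := hMclosed.completeSpace_coe
  haveI : Submodule.HasOrthogonalProjection M := Submodule.HasOrthogonalProjection.ofCompleteSpace M
  have hDM : (D : Set E) ⊆ (M : Set E) := by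
    rintro x ⟨hx, hxM, _⟩; exact hxM
  apply subset_antisymm
  · rw [← hMclosed.closure_eq]
    exact closure_mono hDM
  · -- density
    intro m hm
    rw [Metric.mem_closure_iff]
    intro ε hε
    -- approximate m by u ∈ S.domain
    have hmem : m ∈ closure (S.domain : Set E) := hd m
    rw [Metric.mem_closure_iff] at hmem
    obtain ⟨u, hu, hdu⟩ := hmem (ε/2) (by linarith)
    set u' : S.domain := ⟨u, hu⟩ with hu'def
    set v : E := L S Complex.I u' with hvdef
    obtain ⟨x₁, hx₁L, hx₁D⟩ := surjD hd hsym hcl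
      (M.orthogonalProjectionOnto v).2 (by simp : (Complex.I).im ≠ 0)
    -- claim : u - x₁ ⊥ M
    have horthog : u - (x₁ : E) ∈ Mᗮ := by
      rw [Submodule.mem_orthogonal]
      intro f hf
      obtain ⟨y, hyL, hyD⟩ := surjD hd hsym hcl hf (by simp : (-Complex.I).im ≠ 0)
      have hyM : (y : E) ∈ M := hyD.2.1
      -- f = S y + I y
      have hfval : f = S y + Complex.I • (y : E) := by
        rw [L_apply] at hyL
        rw [← hyL, neg_smul, sub_neg_eq_add]
      have hsub : ((u' - x₁ : S.domain) : E) = u - (x₁ : E) := rfl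
      rw [← hsub, hfval, inner_add_left, inner_smul_left]
      rw [hsym y (u' - x₁)]
      have hcmb : ⟪(y : E), S (u' - x₁)⟫_ℂ
            + conj Complex.I * ⟪(y : E), ((u' - x₁ : S.domain) : E)⟫_ℂ
          = ⟪(y : E), S (u' - x₁) - Complex.I • ((u' - x₁ : S.domain) : E)⟫_ℂ := by
        rw [inner_sub_right, inner_smul_right, Complex.conj_I]
        ring
      rw [hcmb]
      have hLu : S (u' - x₁) - Complex.I • ((u' - x₁ : S.domain) : E)
          = v - M.orthogonalProjectionOnto v := by
        have h2 : L S Complex.I (u' - x₁) = v - M.orthogonalProjectionOnto v := by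
          rw [_root_.map_sub, hx₁L]
        rw [← h2, L_apply]
      rw [hLu]
      exact Submodule.inner_right_of_mem_orthogonal hyM
        (Submodule.sub_starProjection_mem_orthogonal _)
    -- P u = x₁, P m = m
    have hPu : ((M.orthogonalProjectionOnto u : M) : E) = (x₁ : E) :=
      Submodule.eq_starProjection_of_mem_orthogonal hx₁D.2.1 horthog
    have hPm : ((M.orthogonalProjectionOnto m : M) : E) = m :=
      Submodule.starProjection_eq_self_iff.mpr hm
    refine ⟨(x₁ : E), hx₁D, ?_⟩
    have hdist : dist m (x₁ : E) ≤ dist m u := by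
      rw [dist_eq_norm, dist_eq_norm]
      have heq2 : m - (x₁ : E)
          = ((M.orthogonalProjectionOnto (m - u) : M) : E) := by
        rw [_root_.map_sub]
        push_cast
        rw [hPu, hPm]
      rw [heq2]
      calc ‖((M.orthogonalProjectionOnto (m - u) : M) : E)‖
          = ‖M.orthogonalProjectionOnto (m - u)‖ := rfl
      _ ≤ ‖M.orthogonalProjectionOnto‖ * ‖m - u‖ := (M.orthogonalProjectionOnto).le_opNorm _
      _ ≤ 1 * ‖m - u‖ :=
          mul_le_mul_of_nonneg_right (Submodule.orthogonalProjectionOnto_norm_le M) (norm_nonneg _)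
      _ = ‖m - u‖ := one_mul _
    calc dist m (x₁ : E) ≤ dist m u := hdist
    _ < ε / 2 := hdu
    _ < ε := by linarith

include hd hsym hcl in
lemma hard_direction (hM : ((Gsp S.adjoint)ᗮ : Submodule ℂ E) ≠ ⊥) :
    ∃ D : Submodule ℂ E, D ≠ ⊥ ∧ (D : Set E) ⊆ S.domain ∧ RestrictsToSelfAdjoint S D := by
  classical
  set M : Submodule ℂ E := (Gsp S.adjoint)ᗮ with hMdef
  set D : Submodule ℂ E := DD S M with hDdef
  set K : Submodule ℂ E := D.topologicalClosure with hKdef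
  have hKM : K = M := by
    apply SetLike.ext'
    rw [hKdef, Submodule.topologicalClosure_coe]
    exact DD_dense hd hsym hcl
  have hDK : D ≤ K := D.le_topologicalClosure
  have hMK : M ≤ K := le_of_eq hKM.symm
  have hKMle : K ≤ M := le_of_eq hKM
  -- nontriviality
  have hDbot : D ≠ ⊥ := by
    obtain ⟨f, hfM, hf0⟩ := Submodule.exists_mem_ne_zero_of_ne_bot hM
    obtain ⟨x, hxL, hxD⟩ := surjD hd hsym hcl hfM (by simp : (Complex.I).im ≠ 0)
    intro hbot
    have hx0 : (x : E) = 0 := by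
      have hxD2 : (x : E) ∈ D := hxD
      rw [hbot] at hxD2
      exact (Submodule.mem_bot ℂ).mp hxD2
    have : x = 0 := Subtype.ext hx0
    rw [this, _root_.map_zero] at hxL
    exact hf0 hxL.symm
  refine ⟨D, hDbot, fun x hx => hx.1, ?_⟩
  -- build SD
  haveI : CompleteSpace K := D.isClosed_topologicalClosure.completeSpace_coe
  -- the inclusion of the domain into S.domain
  set D' : Submodule ℂ ↥K := D.comap K.subtype with hD'def
  have hmemD' : ∀ z : ↥K, z ∈ D' ↔ (z : E) ∈ D := fun z => Iff.rfl
  have hSdom : ∀ z : E, z ∈ D → z ∈ S.domain := fun z hz => hz.1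
  let incl : D' →ₗ[ℂ] S.domain :=
    { toFun := fun z => ⟨((z : ↥K) : E), hSdom _ z.2⟩
      map_add' := fun a b => Subtype.ext rfl
      map_smul' := fun c a => Subtype.ext rfl }
  have hrange : ∀ z : D', S.toFun (incl z) ∈ K := by
    intro z
    have h1 : S.toFun (incl z) ∈ M := by
      have := (z.2 : ((z : ↥K) : E) ∈ D)
      obtain ⟨hx, hxM, hxS⟩ := this
      have : S.toFun (incl z) = S ⟨((z : ↥K) : E), hx⟩ := rfl
      rw [this]
      exact hxS
    exact hMK h1
  let SD : ↥K →ₗ.[ℂ] ↥K :=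
    { domain := D'
      toFun := LinearMap.codRestrict K (S.toFun.comp incl) hrange }
  have hSDapply : ∀ z : D', ((SD z : ↥K) : E) = S (incl z) := fun z => rfl
  have hSDdom : SD.domain = D' := rfl
  -- graph characterization
  have hgraph : ∀ x y : ↥K, (x, y) ∈ SD.graph ↔
      ((x : E) ∈ D ∧ ∃ hx : (x : E) ∈ S.domain, S ⟨(x : E), hx⟩ = (y : E)) := by
    intro x y
    rw [LinearPMap.mem_graph_iff]
    constructor
    · rintro ⟨z, hz1, hz2⟩
      simp only at hz1 hz2
      have hzD : ((z : ↥K) : E) ∈ D := z.2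
      rw [hz1] at hzD
      refine ⟨hzD, hSdom _ hzD, ?_⟩
      have h1 : ((SD z : ↥K) : E) = (y : E) := by rw [hz2]
      rw [hSDapply] at h1
      have h2 : S ⟨(x : E), hSdom _ hzD⟩ = S (incl z) := by
        congr 1
        apply Subtype.ext
        simp only [incl, LinearMap.coe_mk, AddHom.coe_mk]
        rw [hz1]
      rw [h2, h1]
    · rintro ⟨hxD, hx, hval⟩
      refine ⟨⟨x, hxD⟩, rfl, ?_⟩
      apply Subtype.ext
      rw [hSDapply]
      have h2 : S (incl ⟨x, hxD⟩) = S ⟨(x : E), hx⟩ := by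
        congr 1
      rw [h2, hval]
  -- selfadjointness
  have hdense : Dense (D' : Set ↥K) := by
    intro x
    rw [closure_subtype]
    have himg : (Subtype.val '' (D' : Set ↥K)) = (D : Set E) := by
      ext a
      constructor
      · rintro ⟨⟨b, hbK⟩, hbD, rfl⟩
        exact hbD
      · intro ha
        exact ⟨⟨a, hDK ha⟩, ha, rfl⟩
    rw [himg]
    have hxM : ((x : E)) ∈ (M : Set E) := hKMle x.2
    rw [← DD_dense hd hsym hcl] at hxM
    exact hxM
  have hsymSD : Symm SD := by
    intro x y
    rw [Submodule.coe_inner, Submodule.coe_inner, hSDapply, hSDapply]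
    exact hsym (incl x) (incl y)
  have hsurjSD : ∀ lam : ℂ, lam.im ≠ 0 → ∀ y : ↥K, ∃ x : SD.domain, L SD lam x = y := by
    intro lam hlam y
    have hyM : ((y : E)) ∈ M := hKMle y.2
    obtain ⟨x, hxL, hxD⟩ := surjD hd hsym hcl hyM hlam
    refine ⟨⟨⟨(x : E), hDK hxD⟩, hxD⟩, ?_⟩
    apply Subtype.ext
    rw [L_apply]
    rw [L_apply] at hxL
    calc ((SD ⟨⟨(x : E), hDK hxD⟩, hxD⟩ - lam • ((⟨⟨(x : E), hDK hxD⟩, hxD⟩ : D') : ↥K) : ↥K) : E)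
        = S (incl ⟨⟨(x : E), hDK hxD⟩, hxD⟩) - lam • (x : E) := by
          push_cast [hSDapply]; rfl
    _ = S x - lam • (x : E) := by
          congr 2
    _ = (y : E) := hxL
  have hSA : IsSelfAdjoint SD :=
    selfAdjoint_of_symm_of_surj SD hdense hsymSD hsurjSD
  exact ⟨SD, hSA, hgraph⟩

end Hard

lemma easy_direction {S : E →ₗ.[ℂ] E} (hd : Dense (S.domain : Set E))
    (huniv : closure ((Gsp S.adjoint : Submodule ℂ E) : Set E) = Set.univ)
    {D : Submodule ℂ E} (hDbot : D ≠ ⊥) (hDdom : (D : Set E) ⊆ S.domain)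
    (hres : RestrictsToSelfAdjoint S D) : False := by
  obtain ⟨SD, hSA, hgraph⟩ := hres
  -- every element of K is orthogonal to all defect spaces
  have hKorth : ∀ k : ↥D.topologicalClosure, ((k : E)) ∈ (Gsp S.adjoint)ᗮ := by
    intro k
    rw [mem_orth_Gsp_iff]
    intro lam hlam g hg
    obtain ⟨x, hx⟩ := surj_of_selfAdjoint hSA (by simpa using hlam : (conj lam).im ≠ 0) k
    have hmemgraph := SD.mem_graph x
    rw [hgraph] at hmemgraph
    obtain ⟨hxD, hxS, hval⟩ := hmemgraph
    -- coe the equation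
    have hcoe : ((SD x : ↥D.topologicalClosure) : E) - conj lam • (((x : ↥D.topologicalClosure)) : E) = (k : E) := by
      rw [← hx]; rfl
    rw [← hcoe, ← hval]
    have : S ⟨((x : ↥D.topologicalClosure) : E), hxS⟩ - conj lam • (((x : ↥D.topologicalClosure)) : E)
        = L S (conj lam) ⟨((x : ↥D.topologicalClosure) : E), hxS⟩ := rfl
    rw [this, inner_L_of_mem_kerAt hd hg (conj lam)]
    simp
  -- K contains a nonzero element
  obtain ⟨d, hdD, hd0⟩ := Submodule.exists_mem_ne_zero_of_ne_bot hDbot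
  have hdK : d ∈ D.topologicalClosure := D.le_topologicalClosure hdD
  have hdorth : d ∈ (Gsp S.adjoint)ᗮ := hKorth ⟨d, hdK⟩
  -- d orthogonal to everything
  have hclosed : IsClosed {u : E | ⟪u, d⟫_ℂ = 0} :=
    isClosed_eq (Continuous.inner continuous_id continuous_const) continuous_const
  have hsub : closure ((Gsp S.adjoint : Submodule ℂ E) : Set E) ⊆ {u : E | ⟪u, d⟫_ℂ = 0} := by
    apply closure_minimal _ hclosed
    intro u hu
    exact (Submodule.mem_orthogonal _ _).mp hdorth u hu
  have : ⟪d, d⟫_ℂ = 0 := hsub (huniv ▸ Set.mem_univ d)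
  exact hd0 (inner_self_eq_zero.mp this)

lemma part2 {S A T : E →ₗ.[ℂ] E} (hd : Dense (S.domain : Set E))
    (hA : IsSelfAdjoint A) (hSA : S ≤ A) (hAT : A ≤ T) (hTS : T ≤ S.adjoint)
    (hTcl : T.closure = S.adjoint) :
    closure ((Gsp S.adjoint : Submodule ℂ E) : Set E)
      = closure ((Gsp T : Submodule ℂ E) : Set E) := by
  -- kerAt T ⊆ kerAt S.adjoint
  have hker_sub : ∀ lam : ℂ, kerAt T lam ⊆ kerAt S.adjoint lam := by
    intro lam f hf
    obtain ⟨hfT, hfval⟩ := hf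
    have hfS : f ∈ S.adjoint.domain := hTS.1 hfT
    refine ⟨hfS, ?_⟩
    have := hTS.2 (x := ⟨f, hfT⟩) (y := ⟨f, hfS⟩) rfl
    rw [← this, hfval]
  -- key: kerAt S.adjoint lam ⊆ closure (Gsp T)
  have hker_clo : ∀ lam : ℂ, lam.im ≠ 0 →
      kerAt S.adjoint lam ⊆ closure ((Gsp T : Submodule ℂ E) : Set E) := by
    intro lam hlam f hf
    obtain ⟨hfdom, hfval⟩ := hf
    -- (f, lam • f) is in the closure of the graph of T
    have hTclosable : T.IsClosable :=
      (adjoint_isClosed S hd).isClosable.leIsClosable hTS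
    have hgraph : S.adjoint.graph = T.graph.topologicalClosure := by
      rw [hTclosable.graph_closure_eq_closure_graph, hTcl]
    have hmem : (f, lam • f) ∈ closure (T.graph : Set (E × E)) := by
      have h1 : (f, lam • f) ∈ S.adjoint.graph := by
        rw [LinearPMap.mem_graph_iff]
        exact ⟨⟨f, hfdom⟩, rfl, hfval⟩
      rw [hgraph] at h1
      exact h1
    rw [mem_closure_iff_seq_limit] at hmem
    obtain ⟨p, hp, hplim⟩ := hmem
    -- for each n pick z n : T.domain with value
    have hz : ∀ n, ∃ z : T.domain, (z : E) = (p n).1 ∧ T z = (p n).2 := by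
      intro n
      have := hp n
      rw [SetLike.mem_coe, LinearPMap.mem_graph_iff] at this
      obtain ⟨z, h1, h2⟩ := this
      exact ⟨z, h1, h2⟩
    choose z hz1 hz2 using hz
    -- the defect w n and its preimage u n under A - lam
    set w : ℕ → E := fun n => (p n).2 - lam • (p n).1 with hwdef
    have hwlim : Filter.Tendsto w Filter.atTop (nhds 0) := by
      have h1 : Filter.Tendsto (fun n => (p n).1) Filter.atTop (nhds f) :=
        (continuous_fst.tendsto _).comp hplim
      have h2 : Filter.Tendsto (fun n => (p n).2) Filter.atTop (nhds (lam • f)) :=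
        (continuous_snd.tendsto _).comp hplim
      have := h2.sub (h1.const_smul lam)
      simpa using this
    have hu : ∀ n, ∃ u : A.domain, A u - lam • (u : E) = w n :=
      fun n => surj_of_selfAdjoint hA hlam (w n)
    choose u hu using hu
    -- u n → 0 and A u n → 0
    have hulim : Filter.Tendsto (fun n => ((u n : E))) Filter.atTop (nhds 0) := by
      rw [tendsto_iff_norm_sub_tendsto_zero]
      have hb : ∀ n, ‖(u n : E) - 0‖ ≤ |lam.im|⁻¹ * ‖w n‖ := by
        intro n
        have := lower_bound (symm_of_selfAdjoint hA) lam (u n)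
        rw [L_apply, hu n] at this
        have him : 0 < |lam.im| := abs_pos.mpr hlam
        rw [sub_zero, ← le_div_iff₀' him] at *
        rw [div_eq_inv_mul] at this
        exact this
      have h0 : Filter.Tendsto (fun n => |lam.im|⁻¹ * ‖w n‖) Filter.atTop (nhds 0) := by
        have := (hwlim.norm).const_mul |lam.im|⁻¹
        simpa using this
      exact squeeze_zero (fun n => norm_nonneg _) hb h0
    have hAulim : Filter.Tendsto (fun n => A (u n)) Filter.atTop (nhds 0) := by
      have : ∀ n, A (u n) = w n + lam • ((u n : E)) := by
        intro n
        have := hu n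
        rw [← this]; abel
      simp_rw [this]
      have := hwlim.add (hulim.const_smul lam)
      simpa using this
    -- v n := z n - u n lies in kerAt T lam
    have huT : ∀ n, ((u n : E)) ∈ T.domain := fun n => hAT.1 (u n).2
    have hvker : ∀ n, ((z n : E)) - ((u n : E)) ∈ kerAt T lam := by
      intro n
      set v : T.domain := z n - ⟨(u n : E), huT n⟩ with hvdef
      have hvcoe : (v : E) = ((z n : E)) - ((u n : E)) := rfl
      refine ⟨hvcoe ▸ v.2, ?_⟩
      have hsub : (⟨((z n : E)) - ((u n : E)), hvcoe ▸ v.2⟩ : T.domain) = v :=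
        Subtype.ext hvcoe.symm
      rw [hsub]
      have hTu : T ⟨(u n : E), huT n⟩ = A (u n) := (hAT.2 (x := u n) rfl).symm
      rw [hvdef, LinearPMap.map_sub, hTu, hz2 n]
      have hA2 : A (u n) = w n + lam • ((u n : E)) := by rw [← hu n]; abel
      have hw : w n = (p n).2 - lam • ((z n : E)) := by simp only [hwdef, hz1 n]
      rw [hA2, smul_sub, hw]
      abel
    -- conclude: f is a limit of elements of kerAt T lam
    have hvlim : Filter.Tendsto (fun n => ((z n : E)) - ((u n : E))) Filter.atTop (nhds f) := by
      have h1 : Filter.Tendsto (fun n => ((z n : E))) Filter.atTop (nhds f) := by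
        have h1' : Filter.Tendsto (fun n => (p n).1) Filter.atTop (nhds f) :=
          (continuous_fst.tendsto _).comp hplim
        simpa [hz1] using h1'
      have := h1.sub hulim
      simpa using this
    apply mem_closure_of_tendsto hvlim
    filter_upwards with n
    apply Submodule.subset_span
    exact Set.mem_biUnion hlam (hvker n)
  -- conclude equality of closures
  apply subset_antisymm
  · have hGle : (Gsp S.adjoint : Submodule ℂ E) ≤ (Gsp T).topologicalClosure := by
      rw [Gsp]
      apply Submodule.span_le.mpr
      intro x hx
      obtain ⟨lam, hlam, hxk⟩ := Set.mem_iUnion₂.mp hx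
      have : x ∈ closure ((Gsp T : Submodule ℂ E) : Set E) := hker_clo lam hlam hxk
      rwa [← Submodule.topologicalClosure_coe] at this
    have h2 : closure ((Gsp S.adjoint : Submodule ℂ E) : Set E)
        ⊆ closure (((Gsp T).topologicalClosure : Submodule ℂ E) : Set E) :=
      closure_mono hGle
    rwa [Submodule.topologicalClosure_coe, closure_closure] at h2
  · apply closure_mono
    apply Submodule.span_le.mpr
    intro x hx
    obtain ⟨lam, hlam, hxk⟩ := Set.mem_iUnion₂.mp hx
    apply Submodule.subset_span
    exact Set.mem_biUnion hlam (hker_sub lam hxk)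

end St10

/-- A densely defined closed symmetric operator `S` in a Hilbert space `H` is
simple if and only if `H` equals the closed linear span of the defect spaces `ker (S* - lam)`,
`lam ∈ ℂ∖ℝ`; moreover, when `A ⊆ T ⊆ S*` with `T̄ = S*` (`A` a selfadjoint extension of `S`),
this span coincides with the closed linear span of the spaces `ker (T - lam)`, `lam ∈ ℂ∖ℝ`. -/
theorem statement10
    (S A T : H →ₗ.[ℂ] H)
    (hSdense : Dense (S.domain : Set H)) (hSclosed : S.IsClosed)
    (hSsym : ∀ f g : S.domain, ⟪S f, (g : H)⟫_ℂ = ⟪(f : H), S g⟫_ℂ)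
    (hA : IsSelfAdjoint A) (hSA : S ≤ A) (hAT : A ≤ T) (hTS : T ≤ S.adjoint)
    (hTcl : T.closure = S.adjoint) :
    (IsSimplePMap S ↔
      closure (Submodule.span ℂ (⋃ lam ∈ {z : ℂ | z.im ≠ 0}, kerAt S.adjoint lam) : Set H) =
        Set.univ) ∧
    closure (Submodule.span ℂ (⋃ lam ∈ {z : ℂ | z.im ≠ 0}, kerAt S.adjoint lam) : Set H) =
      closure (Submodule.span ℂ (⋃ lam ∈ {z : ℂ | z.im ≠ 0}, kerAt T lam) : Set H) := by
  constructor
  · constructor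
    · -- simple → span dense
      intro hsimple
      by_contra hne
      have hMne : ((St10.Gsp S.adjoint)ᗮ : Submodule ℂ H) ≠ ⊥ := by
        intro hbot
        apply hne
        have h2 : ((St10.Gsp S.adjoint)ᗮᗮ : Submodule ℂ H)
            = (St10.Gsp S.adjoint).topologicalClosure :=
          Submodule.orthogonal_orthogonal_eq_closure _
        rw [hbot, Submodule.bot_orthogonal_eq_top] at h2
        calc closure ((Submodule.span ℂ
              (⋃ lam ∈ {z : ℂ | z.im ≠ 0}, kerAt S.adjoint lam) : Submodule ℂ H) : Set H)
            = (((St10.Gsp S.adjoint).topologicalClosure : Submodule ℂ H) : Set H) :=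
              (Submodule.topologicalClosure_coe _).symm
        _ = ((⊤ : Submodule ℂ H) : Set H) := by rw [← h2]
        _ = Set.univ := rfl
      obtain ⟨D, hD1, hD2, hD3⟩ := St10.hard_direction hSdense hSsym hSclosed hMne
      exact hsimple ⟨D, hD1, hD2, hD3⟩
    · -- span dense → simple
      intro huniv hex
      obtain ⟨D, hD1, hD2, hD3⟩ := hex
      exact St10.easy_direction hSdense huniv hD1 hD2 hD3
  · exact St10.part2 hSdense hA hSA hAT hTS hTcl
end
end

section
/- For each λ ∈ ρ(A_D), the map Γ(λ) assigning to φ ∈ H^{3/2}(∂Ω) the unique solution f_λ ∈ H²(Ω) of 𝓛 f_λ = λ f_λ with trace f_λ|_{∂Ω} = φ is a bounded operator from L²(∂Ω) to L²(Ω) with dense domain H^{3/2}(∂Ω), and its adjoint satisfies Γ(λ̄)*(A_D − λ)f = −∂f/∂ν|_{∂Ω} for all f ∈ dom A_D. -/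
open scoped InnerProductSpace ComplexConjugate

noncomputable section

variable {H B : Type*}
  [NormedAddCommGroup H] [InnerProductSpace ℂ H] [CompleteSpace H]
  [NormedAddCommGroup B] [InnerProductSpace ℂ B] [CompleteSpace B]

/- Abstract elliptic setting: `H = L²(Ω)`, `B = L²(∂Ω)`, `T = 𝓛 ↾ H²(Ω)`, `γ0` the Dirichlet
trace, `γ1` the conormal trace, `H32 = H^{3/2}(∂Ω)`, `H12 = H^{1/2}(∂Ω)`, `AD` the selfadjoint
Dirichlet realization of `𝓛`;  `Γm lam φ` is the unique solution `f_lam ∈ H²(Ω)` of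
`𝓛 f = lam f` with `f|_{∂Ω} = φ`, for `lam ∈ ρ(A_D)`. -/

/-- For each `lam ∈ ρ(A_D)`, the solution operator `Γ(lam)` assigning to
`φ ∈ H^{3/2}(∂Ω)` the unique `f_lam ∈ H²(Ω)` with `𝓛 f_lam = lam f_lam` and
`f_lam|_{∂Ω} = φ` is a bounded operator from `L²(∂Ω)` to `L²(Ω)` with dense domain
`H^{3/2}(∂Ω)`, and its adjoint satisfies `Γ(conj lam)* (A_D - lam) f = - ∂f/∂ν|_{∂Ω}` for all
`f ∈ dom A_D` (weakly: `⟪- γ1 f, φ⟫ = ⟪(A_D - lam) f, Γ(conj lam) φ⟫` for all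
`φ ∈ H^{3/2}(∂Ω)`, which determines `Γ(conj lam)*` since `H^{3/2}(∂Ω)` is dense). -/
theorem statement12
    (T : H →ₗ.[ℂ] H) (hTdense : Dense (T.domain : Set H))
    (γ0 γ1 : ↥T.domain →ₗ[ℂ] B)
    (H32 H12 : Submodule ℂ B) (hH32dense : Dense (H32 : Set B)) (hH12dense : Dense (H12 : Set B))
    (hγ0mem : ∀ f : T.domain, γ0 f ∈ H32) (hγ1mem : ∀ f : T.domain, γ1 f ∈ H12)
    (hGreen : ∀ f g : T.domain,
      ⟪T f, (g : H)⟫_ℂ - ⟪(f : H), T g⟫_ℂ = ⟪γ0 f, γ1 g⟫_ℂ - ⟪γ1 f, γ0 g⟫_ℂ)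
    (hsurj : ∀ φ ∈ H32, ∀ ψ ∈ H12, ∃ f : T.domain, γ0 f = φ ∧ γ1 f = ψ)
    (AD : H →ₗ.[ℂ] H)
    (hAD : ∀ x y : H,
      (x, y) ∈ AD.graph ↔ ∃ hx : x ∈ T.domain, γ0 ⟨x, hx⟩ = 0 ∧ T ⟨x, hx⟩ = y)
    (hADsa : IsSelfAdjoint AD)
    (Γm : ℂ → (↥H32 →ₗ[ℂ] H))
    (hΓm : ∀ lam : ℂ, InResolventSet AD lam → ∀ φ : H32,
      ∃ hf : Γm lam φ ∈ T.domain,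
        T ⟨Γm lam φ, hf⟩ = lam • Γm lam φ ∧ γ0 ⟨Γm lam φ, hf⟩ = φ)
    (huniq : ∀ lam : ℂ, InResolventSet AD lam →
      ∀ f : T.domain, T f = lam • (f : H) → γ0 f = 0 → (f : H) = 0)
    (lam : ℂ) (hlam : InResolventSet AD lam)
    (hlamc : InResolventSet AD ((starRingEnd ℂ) lam)) :
    (∃ C : ℝ, ∀ φ : H32, ‖Γm lam φ‖ ≤ C * ‖(φ : B)‖) ∧
    Dense (H32 : Set B) ∧
    (∀ f : T.domain, γ0 f = 0 → ∀ φ : H32,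
      ⟪-(γ1 f), (φ : B)⟫_ℂ = ⟪T f - lam • (f : H), Γm ((starRingEnd ℂ) lam) φ⟫_ℂ) := by
  obtain ⟨Rc, hRc1, hRc2⟩ := id hlamc
  -- key identity: ⟪Γm lam φ, h⟫ = -⟪φ, γ1 (Rc h)⟫
  have key : ∀ h : H, ∃ ψ : B, ∀ φ : H32,
      ⟪Γm lam φ, h⟫_ℂ = -⟪(φ : B), ψ⟫_ℂ := by
    intro h
    obtain ⟨hx, hAx⟩ := hRc1 h
    have hgraph : (Rc h, AD ⟨Rc h, hx⟩) ∈ AD.graph := AD.mem_graph ⟨Rc h, hx⟩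
    obtain ⟨hT, hγ0g, hTg⟩ := (hAD (Rc h) (AD ⟨Rc h, hx⟩)).mp hgraph
    set g : T.domain := ⟨Rc h, hT⟩ with hg
    refine ⟨γ1 g, fun φ => ?_⟩
    obtain ⟨hf, hTf, hγ0f⟩ := hΓm lam hlam φ
    set f : T.domain := ⟨Γm lam φ, hf⟩ with hfdef
    have hGr := hGreen f g
    have hTgval : T g = (starRingEnd ℂ) lam • Rc h + h := by
      rw [hTg]
      have := hAx
      linear_combination (norm := module) this
    rw [hγ0f, hγ0g, hTf, hTgval] at hGr
    have hfc : (f : H) = Γm lam φ := rfl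
    have hgc : (g : H) = Rc h := rfl
    rw [hfc, hgc, inner_zero_right, inner_smul_left, inner_add_right,
      inner_smul_right] at hGr
    linear_combination -hGr
  constructor
  · -- boundedness, via Banach–Steinhaus
    have hbs : ∃ C' : ℝ, ∀ i : {φ : H32 // ‖(φ : B)‖ ≤ 1},
        ‖innerSL ℂ (Γm lam i.1)‖ ≤ C' := by
      apply banach_steinhaus
      intro h
      obtain ⟨ψ, hψ⟩ := key h
      refine ⟨‖ψ‖, fun i => ?_⟩
      rw [innerSL_apply_apply, hψ i.1, norm_neg]
      calc ‖⟪(i.1 : B), ψ⟫_ℂ‖ ≤ ‖(i.1 : B)‖ * ‖ψ‖ := norm_inner_le_norm _ _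
        _ ≤ 1 * ‖ψ‖ := by
            have := i.2
            have hψn : (0:ℝ) ≤ ‖ψ‖ := norm_nonneg _
            nlinarith
        _ = ‖ψ‖ := one_mul _
    obtain ⟨C, hC⟩ := hbs
    refine ⟨max C 0, fun φ => ?_⟩
    by_cases hφ : (φ : B) = 0
    · have : φ = 0 := Subtype.ext hφ
      rw [this, map_zero, norm_zero]
      exact mul_nonneg (le_max_right C 0) (norm_nonneg _)
    · set r : ℝ := ‖(φ : B)‖ with hr
      have hrpos : 0 < r := norm_pos_iff.mpr hφ
      set ψ : H32 := ((r : ℂ)⁻¹) • φ with hψdef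
      have hψnorm : ‖(ψ : B)‖ ≤ 1 := by
        have : (ψ : B) = ((r : ℂ)⁻¹) • (φ : B) := rfl
        rw [this, norm_smul]
        simp only [norm_inv, Complex.norm_real, Real.norm_eq_abs,
          abs_of_pos hrpos]
        rw [← hr, inv_mul_cancel₀ hrpos.ne']
      have hbound : ‖Γm lam ψ‖ ≤ max C 0 := by
        have h1 := hC ⟨ψ, hψnorm⟩
        rw [innerSL_apply_norm] at h1
        exact h1.trans (le_max_left _ _)
      have hφeq : φ = (r : ℂ) • ψ := by
        rw [hψdef, smul_smul, mul_inv_cancel₀]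
        · simp
        · exact_mod_cast hrpos.ne'
      calc ‖Γm lam φ‖ = ‖(r : ℂ) • Γm lam ψ‖ := by rw [hφeq, map_smul]
        _ = r * ‖Γm lam ψ‖ := by
            rw [norm_smul, Complex.norm_real, Real.norm_eq_abs, abs_of_pos hrpos]
        _ ≤ r * max C 0 := by
            exact mul_le_mul_of_nonneg_left hbound hrpos.le
        _ = max C 0 * ‖(φ : B)‖ := by rw [← hr, mul_comm]
  refine ⟨hH32dense, fun f hγ0f φ => ?_⟩
  obtain ⟨hg, hTg, hγ0g⟩ := hΓm ((starRingEnd ℂ) lam) hlamc φ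
  set g : T.domain := ⟨Γm ((starRingEnd ℂ) lam) φ, hg⟩ with hgdef
  have hGr := hGreen f g
  rw [hγ0f, hγ0g, hTg] at hGr
  have hgc : (g : H) = Γm ((starRingEnd ℂ) lam) φ := rfl
  rw [hgc, inner_zero_left, inner_smul_right] at hGr
  rw [inner_sub_left, inner_smul_left, inner_neg_left]
  linear_combination -hGr
end
end

section
/- For λ ∈ ρ(A_D) ∩ ρ(A_N) the Dirichlet-to-Neumann map Q(λ) is injective on H^{3/2}(∂Ω), and the resolvent formula (A_D − λ)⁻¹ − (A_N − λ)⁻¹ = Γ(λ) Q(λ)⁻¹ Γ(λ̄)* holds. -/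
open scoped InnerProductSpace ComplexConjugate

noncomputable section

variable {H B : Type*}
  [NormedAddCommGroup H] [InnerProductSpace ℂ H] [CompleteSpace H]
  [NormedAddCommGroup B] [InnerProductSpace ℂ B] [CompleteSpace B]

/- Abstract elliptic setting: `H = L²(Ω)`, `B = L²(∂Ω)`, `T = 𝓛 ↾ H²(Ω)`, `γ0` the Dirichlet
trace, `γ1` the conormal trace, `H32 = H^{3/2}(∂Ω)`, `H12 = H^{1/2}(∂Ω)`; `AD`, `AN` are the
selfadjoint Dirichlet and Neumann realizations of `𝓛`, `Γm lam φ` the unique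
`f_lam ∈ ker (T - lam)` with `γ0 f_lam = φ`, and `Qm` the Dirichlet-to-Neumann map. -/

/-- For `lam ∈ ρ(A_D) ∩ ρ(A_N)` the Dirichlet-to-Neumann map `Q(lam)` is
injective on `H^{3/2}(∂Ω)` and the Krein type resolvent formula
`(A_D - lam)⁻¹ - (A_N - lam)⁻¹ = Γ(lam) Q(lam)⁻¹ Γ(conj lam)*` holds; pointwise: for every
`x ∈ L²(Ω)` there are `ξ = Γ(conj lam)* x ∈ L²(∂Ω)` (characterized weakly against the dense
subspace `H^{3/2}(∂Ω)`) and `φ = Q(lam)⁻¹ ξ ∈ H^{3/2}(∂Ω)` with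
`(A_D - lam)⁻¹ x - (A_N - lam)⁻¹ x = Γ(lam) φ`. -/
theorem statement14
    (T : H →ₗ.[ℂ] H) (hTdense : Dense (T.domain : Set H))
    (γ0 γ1 : ↥T.domain →ₗ[ℂ] B)
    (H32 H12 : Submodule ℂ B) (hH32dense : Dense (H32 : Set B)) (hH12dense : Dense (H12 : Set B))
    (hγ0mem : ∀ f : T.domain, γ0 f ∈ H32) (hγ1mem : ∀ f : T.domain, γ1 f ∈ H12)
    (hGreen : ∀ f g : T.domain,
      ⟪T f, (g : H)⟫_ℂ - ⟪(f : H), T g⟫_ℂ = ⟪γ0 f, γ1 g⟫_ℂ - ⟪γ1 f, γ0 g⟫_ℂ)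
    (hsurj : ∀ φ ∈ H32, ∀ ψ ∈ H12, ∃ f : T.domain, γ0 f = φ ∧ γ1 f = ψ)
    (AD AN : H →ₗ.[ℂ] H)
    (hAD : ∀ x y : H,
      (x, y) ∈ AD.graph ↔ ∃ hx : x ∈ T.domain, γ0 ⟨x, hx⟩ = 0 ∧ T ⟨x, hx⟩ = y)
    (hAN : ∀ x y : H,
      (x, y) ∈ AN.graph ↔ ∃ hx : x ∈ T.domain, γ1 ⟨x, hx⟩ = 0 ∧ T ⟨x, hx⟩ = y)
    (hADsa : IsSelfAdjoint AD) (hANsa : IsSelfAdjoint AN)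
    (Γm : ℂ → (↥H32 →ₗ[ℂ] H))
    (hΓm : ∀ lam : ℂ, InResolventSet AD lam → ∀ φ : H32,
      ∃ hf : Γm lam φ ∈ T.domain,
        T ⟨Γm lam φ, hf⟩ = lam • Γm lam φ ∧ γ0 ⟨Γm lam φ, hf⟩ = φ)
    (huniq : ∀ lam : ℂ, InResolventSet AD lam →
      ∀ f : T.domain, T f = lam • (f : H) → γ0 f = 0 → (f : H) = 0)
    (Qm : ℂ → (↥H32 →ₗ[ℂ] B))
    (hQm : ∀ lam : ℂ, InResolventSet AD lam → ∀ (φ : H32) (f : T.domain),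
      T f = lam • (f : H) → γ0 f = (φ : B) → Qm lam φ = -(γ1 f))
    (lam : ℂ) (RD RN : H →L[ℂ] H)
    (hRD : IsResolventAt AD lam RD) (hRN : IsResolventAt AN lam RN)
    (hlamc : InResolventSet AD ((starRingEnd ℂ) lam)) :
    (∀ φ : H32, Qm lam φ = 0 → φ = 0) ∧
    (∀ x : H, ∃ (ξ : B) (φ : H32),
      (∀ ψ : H32, ⟪ξ, (ψ : B)⟫_ℂ = ⟪x, Γm ((starRingEnd ℂ) lam) ψ⟫_ℂ) ∧
      Qm lam φ = ξ ∧
      RD x - RN x = Γm lam φ) := by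
  have hRDres : InResolventSet AD lam := ⟨RD, hRD⟩
  constructor
  · -- injectivity of Q(lam)
    intro φ hQ0
    obtain ⟨hf, hTf, hγ0f⟩ := hΓm lam hRDres φ
    set f : T.domain := ⟨Γm lam φ, hf⟩ with hfdef
    have hQf : Qm lam φ = -(γ1 f) := hQm lam hRDres φ f hTf hγ0f
    have hγ1f : γ1 f = 0 := by
      have := hQf.symm.trans hQ0
      simpa [neg_eq_zero] using this
    -- f is in the domain of AN with AN f = T f
    have hmem : ((f : H), T f) ∈ AN.graph := by
      rw [hAN]
      exact ⟨f.2, by simpa using hγ1f, by simp⟩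
    rw [LinearPMap.mem_graph_iff] at hmem
    obtain ⟨y, hy1, hy2⟩ := hmem
    have h0 : AN y - lam • (y : H) = 0 := by
      rw [hy2, hy1, hTf]
      simp
      exact sub_self _
    have := hRN.2 y
    rw [h0] at this
    have hy0 : (y : H) = 0 := by simpa using this.symm
    have hf0 : (f : H) = 0 := by simpa using hy1.symm.trans hy0
    have hfz : f = 0 := Subtype.ext hf0
    have : (φ : B) = 0 := by rw [← hγ0f, hfz, map_zero]
    exact Subtype.ext this
  · -- resolvent formula
    intro x
    obtain ⟨hux, hADu⟩ := hRD.1 x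
    have hmemu : (RD x, AD ⟨RD x, hux⟩) ∈ AD.graph := AD.mem_graph ⟨RD x, hux⟩
    rw [hAD] at hmemu
    obtain ⟨hu, hγ0u, hTu⟩ := hmemu
    set u : T.domain := ⟨RD x, hu⟩ with hudef
    have hTux : T u - lam • (u : H) = x := by rw [hTu]; exact hADu
    obtain ⟨hvx, hANv⟩ := hRN.1 x
    have hmemv : (RN x, AN ⟨RN x, hvx⟩) ∈ AN.graph := AN.mem_graph ⟨RN x, hvx⟩
    rw [hAN] at hmemv
    obtain ⟨hv, hγ1v, hTv⟩ := hmemv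
    set v : T.domain := ⟨RN x, hv⟩ with hvdef
    have hTvx : T v - lam • (v : H) = x := by rw [hTv]; exact hANv
    set w : T.domain := u - v with hwdef
    have hwcoe : (w : H) = RD x - RN x := rfl
    have hTw : T w = lam • (w : H) := by
      have h3 : T w = T u - T v := T.map_sub u v
      have h1 : T u = x + lam • (u : H) := sub_eq_iff_eq_add.mp hTux
      have h2 : T v = x + lam • (v : H) := sub_eq_iff_eq_add.mp hTvx
      have h4 : ((w : H)) = (u : H) - (v : H) := rfl
      rw [h3, h1, h2, h4, smul_sub]
      abel
    set φ : H32 := ⟨γ0 w, hγ0mem w⟩ with hφdef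
    refine ⟨Qm lam φ, φ, ?_, rfl, ?_⟩
    · -- weak characterization
      intro ψ
      obtain ⟨hg, hTg, hγ0g⟩ := hΓm ((starRingEnd ℂ) lam) hlamc ψ
      set g : T.domain := ⟨Γm ((starRingEnd ℂ) lam) ψ, hg⟩ with hgdef
      have hQw : Qm lam φ = -(γ1 w) := hQm lam hRDres φ w hTw rfl
      have hγ1w : γ1 w = γ1 u - γ1 v := map_sub γ1 u v
      have hGr := hGreen u g
      rw [hγ0u, hγ0g] at hGr
      have hinnerTg : ⟪(u : H), T g⟫_ℂ = (starRingEnd ℂ) lam * ⟪(u : H), (g : H)⟫_ℂ := by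
        rw [hTg]
        exact inner_smul_right _ _ _
      have hxg : ⟪x, (g : H)⟫_ℂ = -⟪γ1 u, (ψ : B)⟫_ℂ := by
        have h1 : ⟪x, (g : H)⟫_ℂ = ⟪T u, (g : H)⟫_ℂ - ⟪(u : H), T g⟫_ℂ := by
          rw [← hTux, inner_sub_left, inner_smul_left, hinnerTg]
        rw [h1]
        simpa only [inner_zero_left, zero_sub] using hGr
      have hξψ : ⟪(Qm lam φ : B), (ψ : B)⟫_ℂ = -⟪γ1 u, (ψ : B)⟫_ℂ := by
        rw [hQw, hγ1w, hγ1v]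
        simp [inner_sub_left]
      rw [hξψ, hxg]
    · -- Γm lam φ = RD x - RN x
      obtain ⟨hf, hTf, hγ0f⟩ := hΓm lam hRDres φ
      set f : T.domain := ⟨Γm lam φ, hf⟩ with hfdef
      set d : T.domain := f - w with hddef
      have hTd : T d = lam • (d : H) := by
        have : T d = T f - T w := T.map_sub f w
        rw [this, hTf, hTw]
        have : ((d : H)) = (f : H) - (w : H) := rfl
        rw [this, smul_sub]
      have hγ0d : γ0 d = 0 := by
        have : γ0 d = γ0 f - γ0 w := map_sub γ0 f w
        rw [this, hγ0f]
        exact sub_eq_zero.mpr rfl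
      have hd0 : (d : H) = 0 := huniq lam hRDres d hTd hγ0d
      have : (f : H) = (w : H) := by
        have hd : ((d : H)) = (f : H) - (w : H) := rfl
        rw [hd] at hd0
        exact sub_eq_zero.mp hd0
      rw [hwcoe] at this
      exact this.symm
end
end
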